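/- Let G = (V, E) be a finite 3-regular connected simple graph with no Hamiltonian cycle, and let G' be the graph obtained from G by adding one new vertex in the middle of each edge: the vertex set of G' is V ⊔ E, and for each edge e = {u, v} of G, G' has the two edges {u, e} and {v, e}. Then every GTSP tour x on G' — a function from the edges of G' to ℕ such that every vertex of G' has even positive degree and the subgraph of edges with positive value is connected and spans all vertices of G' — satisfies ∑_{e'∈E(G')} x_{e'} ≥ 2|E| + 2. -/

import Mathlib

open scoped Classical

/-- The subdivision `G'` of a graph `G`: one new vertex is added in the middle of each
edge, so the vertex set is `V ⊕ G.edgeSet`, and each edge `e = {u, v}` of `G` is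
replaced by the two edges `{u, e}` and `{v, e}`. -/
def subdivision {V : Type*} (G : SimpleGraph V) : SimpleGraph (V ⊕ G.edgeSet) where
  Adj x y :=
    match x, y with
    | Sum.inl u, Sum.inr e => u ∈ (e : Sym2 V)
    | Sum.inr e, Sum.inl u => u ∈ (e : Sym2 V)
    | _, _ => False
  symm := ⟨by rintro (u | e) (w | f) h <;> exact h⟩
  loopless := ⟨by rintro (u | e) h <;> exact h⟩

/-- A GTSP tour on a finite graph `G`: a natural-number edge-multiplicity vector,
supported on the edges of `G`, with even positive degree at every vertex, whose
support is connected and spans all the vertices. -/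
noncomputable def IsGTSPTour {V : Type*} [Fintype V]
    (G : SimpleGraph V) (x : Sym2 V → ℕ) : Prop :=
  (∀ e, e ∉ G.edgeSet → x e = 0) ∧
    (∀ v : V, Even (∑ e ∈ G.incidenceFinset v, x e) ∧
      0 < ∑ e ∈ G.incidenceFinset v, x e) ∧
    (SimpleGraph.fromEdgeSet {e : Sym2 V | e ∈ G.edgeSet ∧ 0 < x e}).Connected

/-!
Every edge of the subdivision has exactly one endpoint that is a subdivision vertex, so the
weight of a tour is the sum of the tour degrees of the `|E|` subdivision vertices. These are
even and positive, so the weight is even and at least `2|E|`. If it equals `2|E|`, every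
subdivision vertex has tour degree `2`, so each edge `uv` of `G` carries either `1` on both
halves or `0` and `2`. The edges of the first kind form a subgraph `H` of `G` that is
connected and spanning, because the tour's support is; and since the tour degree of an
original vertex `u` is even, `u` has an even number of `H`-neighbours, at most `3`, hence `2`.
So `H` is a Hamiltonian cycle of `G`.
-/

lemma two_mul_card_add_two_le_sum_of_even {ι : Type*} [Fintype ι] {f : ι → ℕ}
    (heven : ∀ i, Even (f i)) (hpos : ∀ i, 0 < f i) (hne : ∃ i, f i ≠ 2) :
    2 * Fintype.card ι + 2 ≤ ∑ i, f i := by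
  have htwo : ∀ i, 2 ≤ f i := fun i => by
    obtain ⟨k, hk⟩ := heven i
    have := hpos i
    omega
  obtain ⟨i, hi⟩ := hne
  have hlt : ∑ _i : ι, 2 < ∑ i, f i :=
    Finset.sum_lt_sum (fun i _ => htwo i) ⟨i, Finset.mem_univ i, by have := htwo i; omega⟩
  rw [Finset.sum_const, Finset.card_univ, smul_eq_mul] at hlt
  obtain ⟨k, hk⟩ : Even (∑ i, f i) := Finset.even_sum _ fun i _ => heven i
  omega

namespace SimpleGraph

variable {V : Type*} [DecidableEq V] {H : SimpleGraph V}

lemma Walk.IsCycle.isHamiltonianCycle_of_forall_mem_support {a : V} {p : H.Walk a a}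
    (hp : p.IsCycle) (hsupp : ∀ v, v ∈ p.support) : p.IsHamiltonianCycle := by
  refine Walk.isHamiltonianCycle_iff_isCycle_and_support_count_tail_eq_one.mpr
    ⟨hp, fun v => List.count_eq_one_of_mem hp.support_nodup ?_⟩
  rcases (p.mem_support_iff).mp (hsupp v) with rfl | h
  · exact Walk.end_mem_tail_support hp.not_nil
  · exact h

lemma Connected.exists_isHamiltonianCycle_of_isCycles [Finite V] (hconn : H.Connected)
    (hcyc : H.IsCycles) {v : V} (hv : (H.neighborSet v).Nonempty) :
    ∃ p : H.Walk v v, p.IsHamiltonianCycle := by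
  obtain ⟨p, hp, hverts⟩ := hcyc.exists_cycle_toSubgraph_verts_eq_connectedComponentSupp
    (c := H.connectedComponentMk v) rfl hv
  refine ⟨p, hp.isHamiltonianCycle_of_forall_mem_support fun w => ?_⟩
  rw [← Walk.mem_verts_toSubgraph, hverts, ConnectedComponent.mem_supp_iff,
    ConnectedComponent.eq]
  exact hconn.preconnected w v

end SimpleGraph

section Subdivision

variable {V : Type*} {G : SimpleGraph V}

open SimpleGraph Finset

lemma mem_edgeSet_subdivision {f : Sym2 (V ⊕ G.edgeSet)} :
    f ∈ (subdivision G).edgeSet ↔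
      ∃ (u : V) (e : G.edgeSet), u ∈ (e : Sym2 V) ∧ f = s(.inl u, .inr e) := by
  refine ⟨fun hf => ?_, fun ⟨u, e, hu, hf⟩ => hf ▸ hu⟩
  induction f using Sym2.ind with
  | _ a b =>
    rcases a with u | e <;> rcases b with w | f
    · exact hf.elim
    · exact ⟨u, f, hf, rfl⟩
    · exact ⟨w, e, hf, Sym2.eq_swap⟩
    · exact hf.elim

section Incidence

variable [DecidableEq (V ⊕ G.edgeSet)]

lemma incidenceFinset_subdivision_inr {e : G.edgeSet}
    [Fintype ((subdivision G).neighborSet (.inr e))] {u v : V} (he : (e : Sym2 V) = s(u, v)) :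
    (subdivision G).incidenceFinset (.inr e) = {s(.inl u, .inr e), s(.inl v, .inr e)} := by
  ext f
  simp only [mem_incidenceFinset, incidenceSet, Set.mem_ofPred_eq, mem_edgeSet_subdivision,
    Finset.mem_insert, Finset.mem_singleton]
  constructor
  · rintro ⟨⟨w, e', hw, rfl⟩, he'⟩
    obtain rfl : e = e' := by simpa using he'
    rw [he, Sym2.mem_iff] at hw
    rcases hw with rfl | rfl <;> simp
  · rintro (rfl | rfl) <;> simp [he]

lemma sum_incidenceFinset_subdivision_inr (x : Sym2 (V ⊕ G.edgeSet) → ℕ) {e : G.edgeSet}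
    [Fintype ((subdivision G).neighborSet (.inr e))] {u v : V} (he : (e : Sym2 V) = s(u, v)) :
    ∑ f ∈ (subdivision G).incidenceFinset (.inr e), x f =
      x s(.inl u, .inr e) + x s(.inl v, .inr e) := by
  have huv : u ≠ v := (G.mem_edgeSet.mp (he ▸ e.2)).ne
  rw [incidenceFinset_subdivision_inr he, Finset.sum_pair (by simpa using huv)]

lemma sum_edgeFinset_subdivision [Fintype G.edgeSet] [Fintype (subdivision G).edgeSet]
    [∀ a, Fintype ((subdivision G).neighborSet a)] (x : Sym2 (V ⊕ G.edgeSet) → ℕ) :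
    ∑ f ∈ (subdivision G).edgeFinset, x f =
      ∑ e : G.edgeSet, ∑ f ∈ (subdivision G).incidenceFinset (.inr e), x f := by
  have hcover : (subdivision G).edgeFinset =
      Finset.univ.biUnion fun e : G.edgeSet => (subdivision G).incidenceFinset (.inr e) := by
    ext f
    simp only [mem_edgeFinset, Finset.mem_biUnion, Finset.mem_univ, true_and,
      mem_incidenceFinset, incidenceSet, Set.mem_ofPred_eq]
    refine ⟨fun hf => ?_, fun ⟨_, hf, _⟩ => hf⟩
    obtain ⟨u, e, -, rfl⟩ := mem_edgeSet_subdivision.mp hf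
    exact ⟨e, hf, by simp⟩
  rw [hcover, Finset.sum_biUnion]
  intro e₁ _ e₂ _ hne
  simp only [Function.onFun, Finset.disjoint_left, mem_incidenceFinset, incidenceSet,
    Set.mem_ofPred_eq]
  rintro f ⟨hf, h₁⟩ ⟨-, h₂⟩
  obtain ⟨u, e, -, rfl⟩ := mem_edgeSet_subdivision.mp hf
  simp only [Sym2.mem_iff, reduceCtorEq, Sum.inr.injEq, false_or] at h₁ h₂
  exact hne (h₁.trans h₂.symm)

end Incidence

/-- `IsGTSPTour` is elaborated with classical instances; this restates its degree condition for
whichever instances are in scope. -/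
lemma IsGTSPTour.even_and_pos_sum_incidenceFinset {W : Type*} [Fintype W] [DecidableEq W]
    {K : SimpleGraph W} [∀ a, Fintype (K.neighborSet a)] {x : Sym2 W → ℕ}
    (hx : IsGTSPTour K x) (a : W) :
    Even (∑ f ∈ K.incidenceFinset a, x f) ∧ 0 < ∑ f ∈ K.incidenceFinset a, x f := by
  convert hx.2.1 a

/-- Under a tour of weight `2|E|` on `subdivision G`, this is the Hamiltonian cycle of `G` that
the tour traces. -/
def crossingGraph (G : SimpleGraph V) (x : Sym2 (V ⊕ G.edgeSet) → ℕ) : SimpleGraph V where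
  Adj u v := ∃ e : G.edgeSet, (e : Sym2 V) = s(u, v) ∧
    0 < x s(.inl u, .inr e) ∧ 0 < x s(.inl v, .inr e)
  symm := ⟨fun _ _ ⟨e, he, hu, hv⟩ => ⟨e, he.trans Sym2.eq_swap, hv, hu⟩⟩
  loopless := ⟨fun u ⟨e, he, _⟩ => G.loopless.irrefl u (G.mem_edgeSet.mp (he ▸ e.2))⟩

variable {x : Sym2 (V ⊕ G.edgeSet) → ℕ}

lemma crossingGraph_adj {u v : V} :
    (crossingGraph G x).Adj u v ↔ ∃ e : G.edgeSet, (e : Sym2 V) = s(u, v) ∧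
      0 < x s(.inl u, .inr e) ∧ 0 < x s(.inl v, .inr e) :=
  Iff.rfl

lemma crossingGraph_le : crossingGraph G x ≤ G := by
  rintro u v ⟨e, he, -⟩
  exact G.mem_edgeSet.mp (he ▸ e.2)

variable [Fintype V] [DecidableEq V] [DecidableRel G.Adj]

lemma IsGTSPTour.exists_mem_pos_of_subdivision (hx : IsGTSPTour (subdivision G) x)
    (e : G.edgeSet) : ∃ u ∈ (e : Sym2 V), 0 < x s(.inl u, .inr e) := by
  obtain ⟨u, v, he⟩ : ∃ u v, (e : Sym2 V) = s(u, v) := Sym2.exists.mp ⟨_, rfl⟩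
  have hpos := (hx.even_and_pos_sum_incidenceFinset (.inr e)).2
  rw [sum_incidenceFinset_subdivision_inr x he] at hpos
  rcases Nat.eq_zero_or_pos (x s(.inl u, .inr e)) with hu | hu
  · exact ⟨v, by simp [he], by omega⟩
  · exact ⟨u, by simp [he], hu⟩

/-- Send each subdivision vertex `e` to an endpoint `φ e` whose half of `e` carries positive
weight: every edge of the tour's support then joins vertices that are reachable in
`crossingGraph`. -/
lemma IsGTSPTour.crossingGraph_connected (hx : IsGTSPTour (subdivision G) x) :
    (crossingGraph G x).Connected := by
  choose φ hφmem hφpos using hx.exists_mem_pos_of_subdivision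
  have hreach : ∀ (u : V) (e : G.edgeSet), u ∈ (e : Sym2 V) → 0 < x s(.inl u, .inr e) →
      (crossingGraph G x).Reachable u (φ e) := by
    intro u e hu hpos
    by_cases h : u = φ e
    · exact h ▸ Reachable.refl u
    · exact Adj.reachable <| crossingGraph_adj.mpr
        ⟨e, (Sym2.mem_and_mem_iff h).mp ⟨hu, hφmem e⟩, hpos, hφpos e⟩
  have hlift : ∀ a b, (fromEdgeSet {f | f ∈ (subdivision G).edgeSet ∧ 0 < x f}).Adj a b →
      (crossingGraph G x).Reachable (Sum.elim id φ a) (Sum.elim id φ b) := by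
    rintro a b ⟨⟨hf, hpos⟩, -⟩
    obtain ⟨u, e, hu, hab⟩ := mem_edgeSet_subdivision.mp hf
    rcases Sym2.eq_iff.mp hab with ⟨rfl, rfl⟩ | ⟨rfl, rfl⟩
    · exact hreach u e hu (hab ▸ hpos)
    · exact (hreach u e hu (hab ▸ hpos)).symm
  have : Nonempty V := hx.2.2.nonempty.map (Sum.elim id φ)
  refine ⟨fun u w => ?_⟩
  have hK := (reachable_iff_reflTransGen _ _).mp (hx.2.2.preconnected (.inl u) (.inl w))
  exact (reachable_iff_reflTransGen _ _).mpr <| Relation.ReflTransGen.lift' (Sum.elim id φ)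
    (fun a b hab => (reachable_iff_reflTransGen _ _).mp (hlift a b hab)) _ _ hK

section TwoOnSubdivision

variable (htwo : ∀ e : G.edgeSet, ∑ f ∈ (subdivision G).incidenceFinset (.inr e), x f = 2)
include htwo

lemma crossingGraph_adj_iff_odd {u v : V} {e : G.edgeSet} (he : (e : Sym2 V) = s(u, v)) :
    (crossingGraph G x).Adj u v ↔ Odd (x s(.inl u, .inr e)) := by
  have hsum := htwo e
  rw [sum_incidenceFinset_subdivision_inr x he] at hsum
  rw [crossingGraph_adj]
  constructor
  · rintro ⟨e', he', hu, hv⟩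
    obtain rfl : e' = e := Subtype.ext (he'.trans he.symm)
    rw [Nat.odd_iff]; omega
  · intro hodd
    rw [Nat.odd_iff] at hodd
    exact ⟨e, he, by omega, by omega⟩

lemma ncard_neighborSet_crossingGraph (u : V) :
    ((crossingGraph G x).neighborSet u).ncard =
      #{f ∈ (subdivision G).incidenceFinset (.inl u) | Odd (x f)} := by
  rw [← Set.ncard_coe_finset]
  refine Set.ncard_congr
    (fun v hv => s(.inl u, .inr ⟨s(u, v), crossingGraph_le (x := x) hv⟩)) ?_ ?_ ?_
  · intro v hv
    simp only [Finset.coe_filter, mem_incidenceFinset, incidenceSet, Set.mem_ofPred_eq,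
      mem_edgeSet_subdivision]
    exact ⟨⟨⟨u, _, Sym2.mem_mk_left u v, rfl⟩, Sym2.mem_mk_left _ _⟩,
      (crossingGraph_adj_iff_odd htwo rfl).mp hv⟩
  · intro v w _ _ h
    obtain h | ⟨rfl, rfl⟩ : v = w ∨ u = w ∧ v = u := by simpa [Subtype.ext_iff] using h
    exacts [h, rfl]
  · intro f hf
    simp only [Finset.coe_filter, mem_incidenceFinset, incidenceSet, Set.mem_ofPred_eq,
      mem_edgeSet_subdivision] at hf
    obtain ⟨⟨⟨u', e, hu', rfl⟩, hu⟩, hodd⟩ := hf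
    obtain rfl : u = u' := by simpa using hu
    obtain ⟨v, he⟩ := Sym2.mem_iff_exists.mp hu'
    exact ⟨v, (crossingGraph_adj_iff_odd htwo he).mpr hodd, by simp [← he]⟩

lemma IsGTSPTour.crossingGraph_isCycles (hdeg : ∀ v, G.degree v ≤ 3)
    (hx : IsGTSPTour (subdivision G) x) : (crossingGraph G x).IsCycles := by
  intro u hne
  have heven : Even ((crossingGraph G x).neighborSet u).ncard := by
    rw [ncard_neighborSet_crossingGraph htwo, ← Finset.even_sum_iff_even_card_odd]
    exact (hx.even_and_pos_sum_incidenceFinset (.inl u)).1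
  have hle : ((crossingGraph G x).neighborSet u).ncard ≤ 3 := calc
    _ ≤ (G.neighborSet u).ncard := Set.ncard_le_ncard (neighborSet_mono crossingGraph_le u)
    _ = G.degree u := by rw [Set.ncard_eq_toFinset_card', ← card_neighborFinset_eq_degree]; rfl
    _ ≤ 3 := hdeg u
  have hpos := hne.ncard_pos
  obtain ⟨k, hk⟩ := heven
  omega

theorem IsGTSPTour.exists_isHamiltonianCycle_of_subdivision [Nontrivial V]
    (hdeg : ∀ v, G.degree v ≤ 3) (hx : IsGTSPTour (subdivision G) x) :
    ∃ (v : V) (p : G.Walk v v), p.IsHamiltonianCycle := by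
  have hconn := hx.crossingGraph_connected
  obtain ⟨v⟩ := hconn.nonempty
  obtain ⟨w, hvw⟩ := hconn.preconnected.exists_adj_of_nontrivial v
  obtain ⟨p, hp⟩ := hconn.exists_isHamiltonianCycle_of_isCycles
    (hx.crossingGraph_isCycles htwo hdeg) ⟨w, hvw⟩
  exact ⟨v, p.map (Hom.ofLE crossingGraph_le), hp.map Function.bijective_id⟩

end TwoOnSubdivision

end Subdivision

/-- if a finite 3-regular connected simple graph `G` has no Hamiltonian
cycle, then every GTSP tour `x` on the subdivision `G'` of `G` has total edge weight at
least `2|E| + 2`. -/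
theorem non_hamiltonian_tour_lower_bound {V : Type*} [Fintype V] [DecidableEq V]
    (G : SimpleGraph V) [DecidableRel G.Adj]
    (hreg : ∀ v : V, G.degree v = 3) (hconn : G.Connected)
    (hnotham : ¬ ∃ (v : V) (p : G.Walk v v), p.IsHamiltonianCycle)
    (x : Sym2 (V ⊕ G.edgeSet) → ℕ) (hx : IsGTSPTour (subdivision G) x) :
    2 * G.edgeFinset.card + 2 ≤ ∑ e ∈ (subdivision G).edgeFinset, x e := by
  obtain ⟨v⟩ := hconn.nonempty
  obtain ⟨w, hvw⟩ := (G.degree_pos_iff_exists_adj v).mp (by rw [hreg v]; norm_num)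
  have : Nontrivial V := ⟨v, w, hvw.ne⟩
  rw [sum_edgeFinset_subdivision, SimpleGraph.edgeFinset_card]
  refine two_mul_card_add_two_le_sum_of_even
    (fun e => (hx.even_and_pos_sum_incidenceFinset (.inr e)).1)
    (fun e => (hx.even_and_pos_sum_incidenceFinset (.inr e)).2) ?_
  by_contra! htwo
  exact hnotham (hx.exists_isHamiltonianCycle_of_subdivision htwo fun v => (hreg v).le)
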